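/- Let μ_I, μ_S, r ∈ ℝ, σ_I, σ_S ∈ ℝ^d with σ_I ≠ σ_S, T > 0, δ, ε ∈ (0,1), and ξ ~ N(0, I_d). Define L = (μ_S − μ_I)T + ((‖σ_I‖² − ‖σ_S‖²)/2)T + √T (σ_S − σ_I)·ξ. If μ_S − μ_I + ‖σ_I‖² − σ_S·σ_I ≥ (z_{δ/2} + z_ε)‖σ_S − σ_I‖/√T, then P( |L + (‖σ_S − σ_I‖²/2)T| < z_{δ/2}‖σ_S − σ_I‖√T ) ≤ ε. -/

import Mathlib

/-!
Expanding `‖σS - σI‖²` gives `L + ‖σS - σI‖² T / 2 = T m + √T ⟪σS - σI, ξ⟫` with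
`m = μS - μI + ‖σI‖² - ⟪σS, σI⟫`. Under the hypothesis on `m`, the event in question forces
`⟪σS - σI, ξ⟫ < -z_ε ‖σS - σI‖`; since `⟪a, ξ⟫ ~ N(0, ‖a‖²)`, the latter event has probability `ε`.
-/

open MeasureTheory ProbabilityTheory

/-- The standard Gaussian measure `N(0, I_d)` on `EuclideanSpace ℝ (Fin d)`. -/
noncomputable def stdGaussian (d : ℕ) : Measure (EuclideanSpace ℝ (Fin d)) :=
  (Measure.pi fun _ : Fin d => gaussianReal 0 1).map
    (EuclideanSpace.equiv (Fin d) ℝ).symm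

/-- The standard normal distribution function `F`. -/
noncomputable def stdNormalCDF (x : ℝ) : ℝ := ((gaussianReal 0 1) (Set.Iic x)).toReal

open scoped RealInnerProductSpace

lemma stdGaussian_eq_stdGaussian_euclideanSpace (d : ℕ) :
    _root_.stdGaussian d = ProbabilityTheory.stdGaussian (EuclideanSpace ℝ (Fin d)) :=
  map_pi_eq_stdGaussian

lemma gaussianReal_Iic_neg_mul_eq_Ici {s : ℝ} (hs : 0 < s) (z : ℝ) :
    gaussianReal 0 (s ^ 2).toNNReal (Set.Iic (-(z * s))) = gaussianReal 0 1 (Set.Ici z) := by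
  have hmap : (gaussianReal 0 1).map ((-s) * ·) = gaussianReal 0 (s ^ 2).toNNReal := by
    rw [gaussianReal_map_const_mul]
    congr 1
    · simp
    · ext; simp [sq_nonneg]
  rw [← hmap, Measure.map_apply (by fun_prop) measurableSet_Iic]
  congr 1
  ext x
  simp [mul_comm z, mul_le_mul_iff_right₀ hs]

section StdGaussian

variable {E : Type*} [NormedAddCommGroup E] [InnerProductSpace ℝ E] [FiniteDimensional ℝ E]
  [MeasurableSpace E] [BorelSpace E]

lemma stdGaussian_map_inner (a : E) :
    (stdGaussian E).map (⟪a, ·⟫) = gaussianReal 0 (‖a‖ ^ 2).toNNReal := by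
  rw [← innerSL_apply_norm ℝ, ← variance_dual_stdGaussian,
    ← integral_strongDual_stdGaussian (innerSL ℝ a)]
  exact IsGaussian.map_eq_gaussianReal (μ := stdGaussian E) (innerSL ℝ a)

lemma stdGaussian_inner_le_neg_mul_norm {a : E} (ha : a ≠ 0) (z : ℝ) :
    stdGaussian E {ξ | ⟪a, ξ⟫ ≤ -(z * ‖a‖)} = gaussianReal 0 1 (Set.Ici z) := by
  rw [← gaussianReal_Iic_neg_mul_eq_Ici (norm_pos_iff.mpr ha), ← stdGaussian_map_inner,
    Measure.map_apply (by fun_prop) measurableSet_Iic]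
  rfl

end StdGaussian

lemma lt_neg_mul_of_abs_mul_add_lt {T m x n z₁ z₂ : ℝ} (hT : 0 < T)
    (hm : (z₁ + z₂) * n / √T ≤ m) (hx : |T * m + √T * x| < z₁ * n * √T) :
    x < -(z₂ * n) := by
  have hsT : 0 < √T := Real.sqrt_pos.mpr hT
  have hTm : √T * ((z₁ + z₂) * n) ≤ T * m := by
    calc √T * ((z₁ + z₂) * n) = T * ((z₁ + z₂) * n / √T) := by
          rw [mul_div_assoc', mul_comm T, mul_div_assoc, Real.div_sqrt, mul_comm]
      _ ≤ T * m := mul_le_mul_of_nonneg_left hm hT.le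
  have hx' : √T * x < √T * -(z₂ * n) := by linarith [(abs_lt.mp hx).2]
  exact (mul_lt_mul_iff_right₀ hsT).mp hx'

theorem stmt6_general {d : ℕ} (μI μS T ε : ℝ) (hT : 0 < T)
    (σI σS : EuclideanSpace ℝ (Fin d)) (hne : σI ≠ σS)
    (zδ2 zε : ℝ)
    -- zδ2 = z_{δ/2} and zε = z_ε, the upper quantiles of N(0,1)
    (hz2 : ((gaussianReal 0 1) (Set.Ici zε)).toReal = ε)
    (h : μS - μI + ‖σI‖ ^ 2 - (inner ℝ σS σI : ℝ)
        ≥ (zδ2 + zε) * ‖σS - σI‖ / Real.sqrt T) :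
    ((stdGaussian d) {ξ |
        |((μS - μI) * T + ((‖σI‖ ^ 2 - ‖σS‖ ^ 2) / 2) * T
            + Real.sqrt T * (inner ℝ (σS - σI) ξ : ℝ))
          + (‖σS - σI‖ ^ 2 / 2) * T|
        < zδ2 * ‖σS - σI‖ * Real.sqrt T}).toReal ≤ ε := by
  have hdrift (x : ℝ) : (μS - μI) * T + ((‖σI‖ ^ 2 - ‖σS‖ ^ 2) / 2) * T + √T * x
      + (‖σS - σI‖ ^ 2 / 2) * T = T * (μS - μI + ‖σI‖ ^ 2 - ⟪σS, σI⟫) + √T * x := by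
    rw [norm_sub_sq_real]
    ring
  have hsub : {ξ : EuclideanSpace ℝ (Fin d) |
      |(μS - μI) * T + ((‖σI‖ ^ 2 - ‖σS‖ ^ 2) / 2) * T + √T * ⟪σS - σI, ξ⟫
        + (‖σS - σI‖ ^ 2 / 2) * T| < zδ2 * ‖σS - σI‖ * √T}
      ⊆ {ξ | ⟪σS - σI, ξ⟫ ≤ -(zε * ‖σS - σI‖)} := fun ξ hξ =>
    (lt_neg_mul_of_abs_mul_add_lt hT h (by rwa [Set.mem_ofPred_eq, hdrift] at hξ)).le
  rw [← hz2, ← stdGaussian_inner_le_neg_mul_norm (sub_ne_zero.mpr hne.symm),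
    stdGaussian_eq_stdGaussian_euclideanSpace]
  exact ENNReal.toReal_mono (measure_ne_top _ _) (measure_mono hsub)

theorem stmt6 {d : ℕ} (μI μS r T δ ε : ℝ) (hT : 0 < T)
    (hδ : δ ∈ Set.Ioo (0 : ℝ) 1) (hε : ε ∈ Set.Ioo (0 : ℝ) 1)
    (σI σS : EuclideanSpace ℝ (Fin d)) (hne : σI ≠ σS)
    (zδ2 zε : ℝ)
    -- zδ2 = z_{δ/2} and zε = z_ε, the upper quantiles of N(0,1)
    (hz1 : ((gaussianReal 0 1) (Set.Ici zδ2)).toReal = δ / 2)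
    (hz2 : ((gaussianReal 0 1) (Set.Ici zε)).toReal = ε)
    (h : μS - μI + ‖σI‖ ^ 2 - (inner ℝ σS σI : ℝ)
        ≥ (zδ2 + zε) * ‖σS - σI‖ / Real.sqrt T) :
    ((stdGaussian d) {ξ |
        |((μS - μI) * T + ((‖σI‖ ^ 2 - ‖σS‖ ^ 2) / 2) * T
            + Real.sqrt T * (inner ℝ (σS - σI) ξ : ℝ))
          + (‖σS - σI‖ ^ 2 / 2) * T|
        < zδ2 * ‖σS - σI‖ * Real.sqrt T}).toReal ≤ ε :=
  stmt6_general μI μS T ε hT σI σS hne zδ2 zε hz2 h
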